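/- The round robin procedure always produces an EF1 allocation: for any agents i, j, either v_i(A_i) ≥ v_i(A_j), or there exists a good o ∈ A_j such that v_i(A_i) ≥ v_i(A_j \ {o}). -/

import Mathlib

open Finset

/-- Tie-breaking argmax: the smallest index in `C` attaining the maximum of `v` on `C`. -/
noncomputable def pickTB (v : ℕ → ℝ) (C : Finset ℕ) : ℕ :=
  if h : (C.filter fun j => ∀ j' ∈ C, v j' ≤ v j).Nonempty
  then (C.filter fun j => ∀ j' ∈ C, v j' ≤ v j).min' h
  else 0

/-- Remaining goods before turn `t` of round robin; at turn `t` agent `t % n` picks. -/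
noncomputable def rrRem (v : ℕ → ℕ → ℝ) (n m : ℕ) : ℕ → Finset ℕ
  | 0 => Finset.range m
  | t + 1 => (rrRem v n m t).erase (pickTB (v (t % n)) (rrRem v n m t))

/-- The good picked at turn `t` of round robin. -/
noncomputable def rrPickAt (v : ℕ → ℕ → ℝ) (n m t : ℕ) : ℕ :=
  pickTB (v (t % n)) (rrRem v n m t)

/-- The bundle allocated to agent `i` by round robin. -/
noncomputable def rrBundle (v : ℕ → ℕ → ℝ) (n m i : ℕ) : Finset ℕ :=
  ((Finset.range m).filter fun t => t % n = i).image (rrPickAt v n m)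

/-- Additive valuation of a bundle. -/
noncomputable def bundleValue (vi : ℕ → ℝ) (S : Finset ℕ) : ℝ := ∑ j ∈ S, vi j

lemma pickTB_spec {v : ℕ → ℝ} {C : Finset ℕ} (h : C.Nonempty) :
    pickTB v C ∈ C ∧ ∀ x ∈ C, v x ≤ v (pickTB v C) := by
  obtain ⟨a, ha, hmax⟩ := C.exists_max_image v h
  have hne : (C.filter fun j => ∀ j' ∈ C, v j' ≤ v j).Nonempty :=
    ⟨a, mem_filter.2 ⟨ha, hmax⟩⟩
  rw [pickTB, dif_pos hne]
  have := Finset.min'_mem _ hne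
  simp only [mem_filter] at this
  exact ⟨this.1, this.2⟩

lemma rrRem_card (v : ℕ → ℕ → ℝ) (n m : ℕ) : ∀ t, t ≤ m → (rrRem v n m t).card = m - t := by
  intro t
  induction t with
  | zero => intro _; simp [rrRem]
  | succ t ih =>
    intro ht
    have h1 : (rrRem v n m t).card = m - t := ih (Nat.le_of_succ_le ht)
    have hne : (rrRem v n m t).Nonempty := by
      rw [← Finset.card_pos, h1]; omega
    rw [rrRem, Finset.card_erase_of_mem (pickTB_spec hne).1, h1]
    omega

lemma rrRem_subset (v : ℕ → ℕ → ℝ) (n m : ℕ) {t t' : ℕ} (h : t ≤ t') :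
    rrRem v n m t' ⊆ rrRem v n m t := by
  induction t' with
  | zero => simp_all
  | succ t' ih =>
    rcases Nat.lt_or_ge t (t'+1) with h' | h'
    · exact (Finset.erase_subset _ _).trans (ih (Nat.lt_succ_iff.1 h'))
    · have : t = t' + 1 := le_antisymm h h'
      subst this; exact subset_rfl

lemma rrRem_nonempty (v : ℕ → ℕ → ℝ) (n m : ℕ) {t : ℕ} (h : t < m) :
    (rrRem v n m t).Nonempty := by
  rw [← Finset.card_pos, rrRem_card v n m t h.le]; omega

lemma rrPickAt_mem (v : ℕ → ℕ → ℝ) (n m : ℕ) {t : ℕ} (h : t < m) :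
    rrPickAt v n m t ∈ rrRem v n m t :=
  (pickTB_spec (rrRem_nonempty v n m h)).1

lemma rrPickAt_max (v : ℕ → ℕ → ℝ) (n m : ℕ) {t : ℕ} (h : t < m) :
    ∀ x ∈ rrRem v n m t, v (t % n) x ≤ v (t % n) (rrPickAt v n m t) :=
  (pickTB_spec (rrRem_nonempty v n m h)).2

lemma rrPickAt_injOn (v : ℕ → ℕ → ℝ) (n m : ℕ) :
    Set.InjOn (rrPickAt v n m) (Finset.range m) := by
  have key : ∀ t t', t < t' → t' < m → rrPickAt v n m t ≠ rrPickAt v n m t' := by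
    intro t t' htt' ht' heq
    have h1 : rrPickAt v n m t' ∈ rrRem v n m (t+1) :=
      rrRem_subset v n m htt' (rrPickAt_mem v n m ht')
    rw [rrRem] at h1
    exact (Finset.ne_of_mem_erase h1) heq.symm
  intro t ht t' ht' heq
  simp only [Finset.coe_range, Set.mem_Iio] at ht ht'
  rcases lt_trichotomy t t' with h | h | h
  · exact absurd heq (key t t' h ht')
  · exact h
  · exact absurd heq.symm (key t' t h ht)

lemma rrPick_decreasing (v : ℕ → ℕ → ℝ) (n m : ℕ) {i t t' : ℕ}
    (hmod : t % n = i) (h : t ≤ t') (ht' : t' < m) :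
    v i (rrPickAt v n m t') ≤ v i (rrPickAt v n m t) := by
  have hmem : rrPickAt v n m t' ∈ rrRem v n m t :=
    rrRem_subset v n m h (rrPickAt_mem v n m ht')
  have := rrPickAt_max v n m (lt_of_le_of_lt h ht') _ hmem
  rwa [hmod] at this

lemma bundle_sum (v : ℕ → ℕ → ℝ) (n m i a : ℕ) :
    bundleValue (v i) (rrBundle v n m a) =
      ∑ t ∈ (Finset.range m).filter (fun t => t % n = a), v i (rrPickAt v n m t) := by
  rw [bundleValue, rrBundle, Finset.sum_image]
  intro x hx y hy hxy
  exact rrPickAt_injOn v n m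
    (by simpa using (Finset.mem_filter.1 hx).1)
    (by simpa using (Finset.mem_filter.1 hy).1) hxy

lemma main_sum (n m : ℕ) (v : ℕ → ℕ → ℝ) (hnn : ∀ i j, 0 ≤ v i j) (i : ℕ) (hi : i < n)
    (c : ℕ) (S : Finset ℕ)
    (hS : ∀ t ∈ S, t < m ∧ c ≤ t ∧ (t - c) % n = i) :
    ∑ t ∈ S, v i (rrPickAt v n m t) ≤ bundleValue (v i) (rrBundle v n m i) := by
  rw [bundle_sum]
  calc ∑ t ∈ S, v i (rrPickAt v n m t)
      ≤ ∑ t ∈ S, v i (rrPickAt v n m (t - c)) := by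
        apply Finset.sum_le_sum
        intro t ht
        obtain ⟨h1, h2, h3⟩ := hS t ht
        exact rrPick_decreasing v n m h3 (Nat.sub_le t c) h1
    _ = ∑ s ∈ S.image (fun t => t - c), v i (rrPickAt v n m s) := by
        rw [Finset.sum_image]
        intro x hx y hy hxy
        have := (hS x hx).2.1; have := (hS y hy).2.1
        simp only at hxy
        omega
    _ ≤ ∑ t ∈ (Finset.range m).filter (fun t => t % n = i), v i (rrPickAt v n m t) := by
        apply Finset.sum_le_sum_of_subset_of_nonneg
        · intro s hs
          obtain ⟨t, ht, rfl⟩ := Finset.mem_image.1 hs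
          obtain ⟨h1, h2, h3⟩ := hS t ht
          exact Finset.mem_filter.2 ⟨Finset.mem_range.2 (by omega), h3⟩
        · intro _ _ _; exact hnn i _

lemma mod_helper1 {n i j t : ℕ} (hi : i < n) (hmod : t % n = j) (hij : i ≤ j) :
    (t - (j - i)) % n = i := by
  have hd := Nat.div_add_mod t n
  rw [hmod] at hd
  set q := t / n with hq
  have h1 : t - (j - i) = n * q + i := by omega
  rw [h1, Nat.mul_add_mod, Nat.mod_eq_of_lt hi]

lemma mod_helper2 {n i j t : ℕ} (hi : i < n) (hj : j < n) (hmod : t % n = j) (htj : t ≠ j) :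
    j + n - i ≤ t ∧ (t - (j + n - i)) % n = i := by
  have hd := Nat.div_add_mod t n
  rw [hmod] at hd
  set q := t / n with hq
  have hq1 : 1 ≤ q := by
    rcases Nat.eq_zero_or_pos q with h | h
    · rw [h, Nat.mul_zero, Nat.zero_add] at hd
      exact (htj hd.symm).elim
    · exact h
  have hnq : n * (q - 1) + n = n * q := by
    rw [← Nat.mul_succ]; congr 1; omega
  constructor
  · omega
  · have h1 : t - (j + n - i) = n * (q - 1) + i := by omega
    rw [h1, Nat.mul_add_mod, Nat.mod_eq_of_lt hi]

/-- Round robin always produces an EF1 allocation. -/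
theorem rr_EF1 (n m : ℕ) (v : ℕ → ℕ → ℝ) (hnn : ∀ i j, 0 ≤ v i j)
    (i j : ℕ) (hi : i < n) (hj : j < n) :
    bundleValue (v i) (rrBundle v n m i) ≥ bundleValue (v i) (rrBundle v n m j) ∨
      ∃ o ∈ rrBundle v n m j,
        bundleValue (v i) (rrBundle v n m i) ≥
          bundleValue (v i) ((rrBundle v n m j).erase o) := by
  by_cases hij : i ≤ j
  · left
    rw [ge_iff_le, bundle_sum]
    apply main_sum n m v hnn i hi (j - i)
    intro t ht
    obtain ⟨h1, h2⟩ := Finset.mem_filter.1 ht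
    have hjt : j ≤ t := h2 ▸ Nat.mod_le t n
    exact ⟨Finset.mem_range.1 h1, by omega, mod_helper1 hi h2 hij⟩
  · by_cases hjm : j < m
    · right
      have hoB : rrPickAt v n m j ∈ rrBundle v n m j :=
        Finset.mem_image.2 ⟨j, Finset.mem_filter.2
          ⟨Finset.mem_range.2 hjm, Nat.mod_eq_of_lt hj⟩, rfl⟩
      refine ⟨rrPickAt v n m j, hoB, ?_⟩
      have hjTj : j ∈ (Finset.range m).filter (fun t => t % n = j) :=
        Finset.mem_filter.2 ⟨Finset.mem_range.2 hjm, Nat.mod_eq_of_lt hj⟩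
      have e1 : bundleValue (v i) ((rrBundle v n m j).erase (rrPickAt v n m j))
          = bundleValue (v i) (rrBundle v n m j) - v i (rrPickAt v n m j) := by
        simp only [bundleValue]
        exact Finset.sum_erase_eq_sub hoB
      have e3 : (∑ t ∈ ((Finset.range m).filter (fun t => t % n = j)).erase j,
            v i (rrPickAt v n m t))
          = (∑ t ∈ (Finset.range m).filter (fun t => t % n = j),
            v i (rrPickAt v n m t)) - v i (rrPickAt v n m j) :=
        Finset.sum_erase_eq_sub hjTj
      rw [ge_iff_le, e1, bundle_sum, ← e3]
      apply main_sum n m v hnn i hi (j + n - i)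
      intro t ht
      obtain ⟨htj, ht'⟩ := Finset.mem_erase.1 ht
      obtain ⟨h1, h2⟩ := Finset.mem_filter.1 ht'
      obtain ⟨ha, hb⟩ := mod_helper2 hi hj h2 htj
      exact ⟨Finset.mem_range.1 h1, ha, hb⟩
    · left
      have hTjempty : (Finset.range m).filter (fun t => t % n = j) = ∅ := by
        rw [Finset.filter_eq_empty_iff]
        intro t ht h
        have := Finset.mem_range.1 ht
        have : j ≤ t := h ▸ Nat.mod_le t n
        omega
      rw [ge_iff_le, bundle_sum, hTjempty, Finset.sum_empty, bundle_sum]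
      exact Finset.sum_nonneg fun t _ => hnn i _
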